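/- arXiv:2510.01871 — 5 statements merged into one kernel-verified Lean document; each statement's English description precedes it below -/
import Mathlib

section
/- The maximum Spearman footrule distance over all pairs of permutations of a finite set of size b equals b²/2 if b is even, and (b²−1)/2 if b is odd. -/
/-- Spearman footrule distance between two permutations of `Fin b`,
where an element's image is its rank. -/
def SF {b : ℕ} (σ σ' : Equiv.Perm (Fin b)) : ℕ :=
  ∑ i : Fin b, ((σ i : ℤ) - (σ' i : ℤ)).natAbs

def T (b : ℕ) : ℕ := ∑ k : Fin b, (2 * (k : ℤ) - ((b : ℤ) - 1)).natAbs

lemma T_rec (n : ℕ) : T (n + 2) = 2 * (n + 1) + T n := by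
  unfold T
  rw [Fin.sum_univ_castSucc, Fin.sum_univ_succ]
  push_cast
  have hmid : ∀ x : Fin n,
      (2 * (((x.succ.castSucc : Fin (n+2)) : ℕ) : ℤ) - ((n : ℤ) + 2 - 1)).natAbs
        = (2 * (x : ℤ) - ((n : ℤ) - 1)).natAbs := by
    intro x
    simp only [Fin.coe_castSucc, Fin.val_succ]
    push_cast
    congr 1
    ring
  rw [Finset.sum_congr rfl (fun x _ => hmid x)]
  have h0 : (2 * (((Fin.castSucc 0 : Fin (n+2)) : ℕ) : ℤ) - ((n : ℤ) + 2 - 1)).natAbs = n + 1 := by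
    simp; omega
  have hl : (2 * ((n : ℤ) + 1) - ((n : ℤ) + 2 - 1)).natAbs = n + 1 := by
    omega
  rw [h0, hl]
  omega

lemma T_val (b : ℕ) : T b = b ^ 2 / 2 := by
  induction b using Nat.twoStepInduction with
  | zero => simp [T]
  | one => simp [T]
  | more n ih _ =>
    have h2 : (n + 2) ^ 2 = n ^ 2 + 4 * n + 4 := by ring
    have := T_rec n
    omega

lemma SF_le {b : ℕ} (σ σ' : Equiv.Perm (Fin b)) : SF σ σ' ≤ T b := by
  have h : 2 * SF σ σ' ≤ 2 * T b := by
    unfold SF T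
    rw [Finset.mul_sum, two_mul]
    nth_rewrite 1 [← Equiv.sum_comp σ (fun k : Fin b => (2 * (k : ℤ) - ((b : ℤ) - 1)).natAbs)]
    rw [← Equiv.sum_comp σ' (fun k : Fin b => (2 * (k : ℤ) - ((b : ℤ) - 1)).natAbs),
      ← Finset.sum_add_distrib]
    apply Finset.sum_le_sum
    intro i _
    omega
  omega

lemma SF_rev (b : ℕ) : SF (1 : Equiv.Perm (Fin b)) Fin.revPerm = T b := by
  unfold SF T
  apply Finset.sum_congr rfl
  intro i _
  have h1 : ((Fin.revPerm i : Fin b) : ℕ) = b - (i + 1) := Fin.val_rev i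
  have h2 : (i : ℕ) + 1 ≤ b := i.isLt
  simp only [Equiv.Perm.coe_one, id_eq, h1]
  omega

/-- The maximum Spearman footrule distance over all pairs of permutations of a
finite set of size `b` equals `b²/2` if `b` is even, and `(b²−1)/2` if `b` is odd. -/
theorem msf_all_perms (b : ℕ) :
    (Finset.univ : Finset (Equiv.Perm (Fin b) × Equiv.Perm (Fin b))).sup
        (fun p => SF p.1 p.2)
      = if Even b then b ^ 2 / 2 else (b ^ 2 - 1) / 2 := by
  have hif : (if Even b then b ^ 2 / 2 else (b ^ 2 - 1) / 2) = T b := by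
    rw [T_val]
    split
    · rfl
    · rename_i h
      have hodd : Odd (b ^ 2) := (Nat.not_even_iff_odd.mp h).pow
      obtain ⟨m, hm⟩ := hodd
      omega
  rw [hif]
  apply le_antisymm
  · exact Finset.sup_le fun p _ => SF_le p.1 p.2
  · have h := Finset.le_sup
        (f := fun p : Equiv.Perm (Fin b) × Equiv.Perm (Fin b) => SF p.1 p.2)
        (Finset.mem_univ ((1 : Equiv.Perm (Fin b)), Fin.revPerm))
    simp only [] at h
    exact (SF_rev b) ▸ h
end

section
/- The MSF of a partial order induced by an ordered partition (bin sequence) equals the sum of the MSFs of the individual bins: if a bin sequence partitions [n] into ordered bins B_1,…,B_K, then MSF(S_𝔅) = Σ_{k=1}^K MSF(S_{B_k}). -/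
open Finset

/-- MSF of the set of all permutations of a set of size `b`
(the MSF of a single bin only depends on its size). -/
def msfBin (b : ℕ) : ℕ :=
  (Finset.univ : Finset (Equiv.Perm (Fin b) × Equiv.Perm (Fin b))).sup (fun p => SF p.1 p.2)

namespace MSFAux

variable {n K : ℕ} (bin : Fin n → Fin K)

def Bk (k : Fin K) : Finset (Fin n) := univ.filter (fun i => bin i = k)

def bsz (k : Fin K) : ℕ := (Bk bin k).card

def csz (k : Fin K) : ℕ := (univ.filter (fun i => bin i < k)).card

lemma csz_add_bsz (k : Fin K) :
    csz bin k + bsz bin k = (univ.filter (fun i => bin i ≤ k)).card := by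
  rw [csz, bsz, Bk, ← Finset.card_union_of_disjoint]
  · congr 1
    ext i
    simp only [Bk, mem_filter, mem_univ, true_and, mem_union]
    exact (le_iff_lt_or_eq).symm
  · rw [Finset.disjoint_filter]
    intro i _ h h'
    exact absurd h' (ne_of_lt h)

lemma csz_add_bsz_le {k k' : Fin K} (h : k < k') :
    csz bin k + bsz bin k ≤ csz bin k' := by
  rw [csz_add_bsz, csz]
  apply Finset.card_le_card
  intro i hi
  simp only [mem_filter, mem_univ, true_and] at *
  exact lt_of_le_of_lt hi h

lemma csz_add_bsz_le_n (k : Fin K) : csz bin k + bsz bin k ≤ n := by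
  rw [csz_add_bsz]
  simpa using Finset.card_filter_le univ (fun i => bin i ≤ k)

lemma card_filter_perm_lt (σ : Equiv.Perm (Fin n)) (x : Fin n) :
    (univ.filter fun j => σ j < σ x).card = (σ x : ℕ) := by
  have : (univ.filter fun j => σ j < σ x).card = (univ.filter fun j => j < σ x).card := by
    apply Finset.card_nbij' σ σ.symm
    · intro a ha; simp at *; exact ha
    · intro a ha; simp at *; simpa using ha
    · intro a _; simp
    · intro a _; simp
  rw [this]
  have : (univ.filter fun j => j < σ x) = Finset.Iio (σ x) := by ext j; simp
  rw [this, Fin.card_Iio]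

lemma card_filter_perm_le (σ : Equiv.Perm (Fin n)) (x : Fin n) :
    (univ.filter fun j => σ j ≤ σ x).card = (σ x : ℕ) + 1 := by
  have : (univ.filter fun j => σ j ≤ σ x).card = (univ.filter fun j => j ≤ σ x).card := by
    apply Finset.card_nbij' σ σ.symm
    · intro a ha; simp at *; exact ha
    · intro a ha; simp at *; simpa using ha
    · intro a _; simp
    · intro a _; simp
  rw [this]
  have : (univ.filter fun j => j ≤ σ x) = Finset.Iic (σ x) := by ext j; simp
  rw [this, Fin.card_Iic]

def Compat (σ : Equiv.Perm (Fin n)) : Prop := ∀ i j : Fin n, bin i < bin j → σ i < σ j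

lemma csz_le {σ : Equiv.Perm (Fin n)} (hσ : Compat bin σ) (i : Fin n) :
    csz bin (bin i) ≤ (σ i : ℕ) := by
  rw [← card_filter_perm_lt σ i, csz]
  apply Finset.card_le_card
  intro j hj
  simp only [mem_filter, mem_univ, true_and] at *
  exact hσ j i hj

lemma lt_csz_add {σ : Equiv.Perm (Fin n)} (hσ : Compat bin σ) (i : Fin n) :
    (σ i : ℕ) < csz bin (bin i) + bsz bin (bin i) := by
  rw [csz_add_bsz, ← Nat.succ_le_iff, Nat.succ_eq_add_one, ← card_filter_perm_le σ i]
  apply Finset.card_le_card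
  intro j hj
  simp only [mem_filter, mem_univ, true_and] at *
  by_contra h
  exact absurd (hσ i j (lt_of_not_ge h)) (not_lt_of_ge hj)


noncomputable def ek (k : Fin K) : {x // x ∈ Bk bin k} ≃ Fin (bsz bin k) :=
  (Bk bin k).equivFin

lemma bin_ek_symm (k : Fin K) (x : Fin (bsz bin k)) :
    bin (((ek bin k).symm x : {x // x ∈ Bk bin k}) : Fin n) = k := by
  have := ((ek bin k).symm x).2
  simp only [Bk, mem_filter] at this
  exact this.2

lemma mem_Bk_self (i : Fin n) : i ∈ Bk bin (bin i) := by simp [Bk]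

noncomputable def down {σ : Equiv.Perm (Fin n)} (hσ : Compat bin σ) (k : Fin K) :
    Equiv.Perm (Fin (bsz bin k)) := by
  apply Equiv.ofBijective
    (fun x => (⟨(σ (((ek bin k).symm x : {x // x ∈ Bk bin k}) : Fin n) : ℕ) - csz bin k, by
      have h1 := csz_le bin hσ (((ek bin k).symm x : {x // x ∈ Bk bin k}) : Fin n)
      have h2 := lt_csz_add bin hσ (((ek bin k).symm x : {x // x ∈ Bk bin k}) : Fin n)
      have hb := bin_ek_symm bin k x
      rw [hb] at h1 h2
      omega⟩ : Fin (bsz bin k)))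
  rw [Fintype.bijective_iff_injective_and_card]
  refine ⟨fun x y hxy => ?_, rfl⟩
  simp only [Fin.mk.injEq] at hxy
  have h1 := csz_le bin hσ (((ek bin k).symm x : {x // x ∈ Bk bin k}) : Fin n)
  have h2 := csz_le bin hσ (((ek bin k).symm y : {x // x ∈ Bk bin k}) : Fin n)
  rw [bin_ek_symm bin k x] at h1
  rw [bin_ek_symm bin k y] at h2
  have : (σ (((ek bin k).symm x : {x // x ∈ Bk bin k}) : Fin n) : ℕ)
      = (σ (((ek bin k).symm y : {x // x ∈ Bk bin k}) : Fin n) : ℕ) := by omega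
  have := σ.injective (Fin.val_injective this)
  have := Subtype.coe_injective this
  exact (ek bin k).symm.injective this

lemma down_spec {σ : Equiv.Perm (Fin n)} (hσ : Compat bin σ) (k : Fin K)
    (x : Fin (bsz bin k)) :
    (σ (((ek bin k).symm x : {x // x ∈ Bk bin k}) : Fin n) : ℤ)
      = (csz bin k : ℤ) + (down bin hσ k x : ℤ) := by
  have h1 := csz_le bin hσ (((ek bin k).symm x : {x // x ∈ Bk bin k}) : Fin n)
  rw [bin_ek_symm bin k x] at h1
  simp only [down, Equiv.ofBijective_apply]
  push_cast [Nat.cast_sub h1]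
  ring


lemma sum_Bk {M : Type*} [AddCommMonoid M] (k : Fin K) (F : Fin (bsz bin k) → M) :
    ∑ i ∈ (Bk bin k).attach, F (ek bin k i) = ∑ x : Fin (bsz bin k), F x :=
  Equiv.sum_comp (ek bin k) F

lemma SF_decomp {σ σ' : Equiv.Perm (Fin n)} (hσ : Compat bin σ) (hσ' : Compat bin σ') :
    SF σ σ' = ∑ k : Fin K, SF (down bin hσ k) (down bin hσ' k) := by
  rw [SF, ← Finset.sum_fiberwise_of_maps_to (fun i _ => mem_univ (bin i))
    (fun i => ((σ i : ℤ) - (σ' i : ℤ)).natAbs)]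
  apply Finset.sum_congr rfl
  intro k _
  simp only [SF]
  rw [show (univ.filter fun i => bin i = k) = Bk bin k from rfl,
    ← Finset.sum_attach (Bk bin k) (fun i => ((σ i : ℤ) - (σ' i : ℤ)).natAbs),
    ← sum_Bk bin k (fun x => ((down bin hσ k x : ℤ) - (down bin hσ' k x : ℤ)).natAbs)]
  apply Finset.sum_congr rfl
  intro i _
  have h1 := down_spec bin hσ k (ek bin k i)
  have h2 := down_spec bin hσ' k (ek bin k i)
  rw [Equiv.symm_apply_apply] at h1 h2
  rw [h1, h2]
  ring_nf

noncomputable def gluefun (τ : ∀ k : Fin K, Equiv.Perm (Fin (bsz bin k))) (i : Fin n) : Fin n :=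
  ⟨csz bin (bin i) + (τ (bin i) (ek bin (bin i) ⟨i, mem_Bk_self bin i⟩) : ℕ), by
    have h1 := csz_add_bsz_le_n bin (bin i)
    have h2 := (τ (bin i) (ek bin (bin i) ⟨i, mem_Bk_self bin i⟩)).isLt
    omega⟩

lemma gluefun_apply (τ : ∀ k : Fin K, Equiv.Perm (Fin (bsz bin k))) (k : Fin K)
    (i : Fin n) (h : i ∈ Bk bin k) :
    (gluefun bin τ i : ℕ) = csz bin k + (τ k (ek bin k ⟨i, h⟩) : ℕ) := by
  have hbk : bin i = k := by simpa [Bk] using h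
  subst hbk
  rfl

lemma gluefun_injective (τ : ∀ k : Fin K, Equiv.Perm (Fin (bsz bin k))) :
    Function.Injective (gluefun bin τ) := by
  intro i j hij
  have hij' : (gluefun bin τ i : ℕ) = (gluefun bin τ j : ℕ) := by rw [hij]
  rcases lt_trichotomy (bin i) (bin j) with h | h | h
  · exfalso
    have hle := csz_add_bsz_le bin h
    rw [gluefun_apply bin τ (bin i) i (mem_Bk_self bin i),
      gluefun_apply bin τ (bin j) j (mem_Bk_self bin j)] at hij'
    have b1 := (τ (bin i) (ek bin (bin i) ⟨i, mem_Bk_self bin i⟩)).isLt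
    omega
  · have hj : j ∈ Bk bin (bin i) := by simp [Bk, h.symm]
    rw [gluefun_apply bin τ (bin i) i (mem_Bk_self bin i),
      gluefun_apply bin τ (bin i) j hj] at hij'
    have := Fin.val_injective (Nat.add_left_cancel hij')
    have := (τ (bin i)).injective this
    have := (ek bin (bin i)).injective this
    exact congrArg Subtype.val this
  · exfalso
    have hle := csz_add_bsz_le bin h
    rw [gluefun_apply bin τ (bin i) i (mem_Bk_self bin i),
      gluefun_apply bin τ (bin j) j (mem_Bk_self bin j)] at hij'
    have b1 := (τ (bin j) (ek bin (bin j) ⟨j, mem_Bk_self bin j⟩)).isLt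
    omega

noncomputable def glue (τ : ∀ k : Fin K, Equiv.Perm (Fin (bsz bin k))) :
    Equiv.Perm (Fin n) :=
  Equiv.ofBijective (gluefun bin τ)
    ((Finite.injective_iff_bijective).mp (gluefun_injective bin τ))

lemma glue_compat (τ : ∀ k : Fin K, Equiv.Perm (Fin (bsz bin k))) :
    Compat bin (glue bin τ) := by
  intro i j h
  have e1 : (glue bin τ i : ℕ) = csz bin (bin i)
      + (τ (bin i) (ek bin (bin i) ⟨i, mem_Bk_self bin i⟩) : ℕ) :=
    gluefun_apply bin τ (bin i) i (mem_Bk_self bin i)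
  have e2 : (glue bin τ j : ℕ) = csz bin (bin j)
      + (τ (bin j) (ek bin (bin j) ⟨j, mem_Bk_self bin j⟩) : ℕ) :=
    gluefun_apply bin τ (bin j) j (mem_Bk_self bin j)
  have hle := csz_add_bsz_le bin h
  have b1 := (τ (bin i) (ek bin (bin i) ⟨i, mem_Bk_self bin i⟩)).isLt
  rw [Fin.lt_iff_val_lt_val]
  omega

lemma SF_glue (τ τ' : ∀ k : Fin K, Equiv.Perm (Fin (bsz bin k))) :
    SF (glue bin τ) (glue bin τ') = ∑ k : Fin K, SF (τ k) (τ' k) := by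
  rw [SF, ← Finset.sum_fiberwise_of_maps_to (fun i _ => mem_univ (bin i))
    (fun i => ((glue bin τ i : ℤ) - (glue bin τ' i : ℤ)).natAbs)]
  apply Finset.sum_congr rfl
  intro k _
  simp only [SF]
  rw [show (univ.filter fun i => bin i = k) = Bk bin k from rfl,
    ← Finset.sum_attach (Bk bin k)
      (fun i => ((glue bin τ i : ℤ) - (glue bin τ' i : ℤ)).natAbs),
    ← sum_Bk bin k (fun x => ((τ k x : ℤ) - (τ' k x : ℤ)).natAbs)]
  apply Finset.sum_congr rfl
  intro i _
  have e1 : ((glue bin τ) i.1 : ℕ) = csz bin k + (τ k (ek bin k i) : ℕ) :=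
    gluefun_apply bin τ k i.1 i.2
  have e2 : ((glue bin τ') i.1 : ℕ) = csz bin k + (τ' k (ek bin k i) : ℕ) :=
    gluefun_apply bin τ' k i.1 i.2
  have e1' : ((glue bin τ) i.1 : ℤ) = (csz bin k : ℤ) + (τ k (ek bin k i) : ℤ) := by
    exact_mod_cast congrArg (fun m : ℕ => (m : ℤ)) e1
  have e2' : ((glue bin τ') i.1 : ℤ) = (csz bin k : ℤ) + (τ' k (ek bin k i) : ℤ) := by
    exact_mod_cast congrArg (fun m : ℕ => (m : ℤ)) e2
  rw [e1', e2']
  ring_nf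

end MSFAux

lemma le_msfBin {b : ℕ} (τ τ' : Equiv.Perm (Fin b)) : SF τ τ' ≤ msfBin b :=
  Finset.le_sup (f := fun p => SF p.1 p.2) (Finset.mem_univ (τ, τ'))

lemma exists_msfBin (b : ℕ) :
    ∃ p : Equiv.Perm (Fin b) × Equiv.Perm (Fin b), msfBin b = SF p.1 p.2 := by
  obtain ⟨q, _, hq⟩ := Finset.exists_mem_eq_sup
    (univ : Finset (Equiv.Perm (Fin b) × Equiv.Perm (Fin b)))
    ⟨(1, 1), Finset.mem_univ _⟩ (fun p => SF p.1 p.2)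
  exact ⟨q, hq⟩


set_option maxHeartbeats 1000000 in
/-- The MSF of the partial order induced by an ordered partition (bin sequence)
of `[n]` into `K` ordered bins equals the sum of the MSFs of the individual bins.
The bin sequence is given by the assignment `bin : Fin n → Fin K` of items to bins;
a ranking `σ` is compatible with the bin sequence iff items in earlier bins
receive smaller ranks. -/

theorem msf_bin_sum (n K : ℕ) (bin : Fin n → Fin K) :
    ((Finset.univ.filter
        (fun σ : Equiv.Perm (Fin n) => ∀ i j : Fin n, bin i < bin j → σ i < σ j)) ×ˢ
      (Finset.univ.filter
        (fun σ : Equiv.Perm (Fin n) => ∀ i j : Fin n, bin i < bin j → σ i < σ j))).sup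
        (fun p => SF p.1 p.2)
      = ∑ k : Fin K, msfBin ((Finset.univ.filter (fun i : Fin n => bin i = k)).card) := by
  have hbsz : ∀ k : Fin K,
      (univ.filter (fun i : Fin n => bin i = k)).card = MSFAux.bsz bin k := fun k => rfl
  apply le_antisymm
  · apply Finset.sup_le
    rintro ⟨σ, σ'⟩ hmem
    simp only [Finset.mem_product, Finset.mem_filter, Finset.mem_univ, true_and] at hmem
    obtain ⟨hσ, hσ'⟩ := hmem
    rw [MSFAux.SF_decomp bin hσ hσ']
    apply Finset.sum_le_sum
    intro k _
    rw [hbsz k]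
    exact le_msfBin _ _
  · have hex : ∀ k : Fin K, ∃ p : Equiv.Perm (Fin (MSFAux.bsz bin k))
        × Equiv.Perm (Fin (MSFAux.bsz bin k)), msfBin (MSFAux.bsz bin k) = SF p.1 p.2 :=
      fun k => exists_msfBin _
    choose p hp using hex
    have key := MSFAux.SF_glue bin (fun k => (p k).1) (fun k => (p k).2)
    calc ∑ k : Fin K, msfBin ((univ.filter (fun i : Fin n => bin i = k)).card)
        = ∑ k : Fin K, SF (p k).1 (p k).2 := by
          apply Finset.sum_congr rfl; intro k _; rw [hbsz k]; exact hp k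
      _ = SF (MSFAux.glue bin fun k => (p k).1) (MSFAux.glue bin fun k => (p k).2) := key.symm
      _ ≤ _ := by
          have hmem : ((MSFAux.glue bin fun k => (p k).1), (MSFAux.glue bin fun k => (p k).2)) ∈
              ((Finset.univ.filter
                (fun σ : Equiv.Perm (Fin n) => ∀ i j : Fin n, bin i < bin j → σ i < σ j)) ×ˢ
              (Finset.univ.filter
                (fun σ : Equiv.Perm (Fin n) => ∀ i j : Fin n, bin i < bin j → σ i < σ j))) := by
            refine Finset.mem_product.mpr ⟨Finset.mem_filter.mpr ⟨Finset.mem_univ _, ?_⟩,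
              Finset.mem_filter.mpr ⟨Finset.mem_univ _, ?_⟩⟩
            · exact MSFAux.glue_compat bin _
            · exact MSFAux.glue_compat bin _
          exact Finset.le_sup (f := fun p => SF p.1 p.2) hmem
end

section
/- Let X_1,…,X_n (n ≥ 2) be i.i.d. uniform random variables on [0,1], representing item scores, and let user thresholds Y_1, Y_2, … be i.i.d. uniform on [0,1], independent of the scores. Let M be the least number of thresholds needed so that between every pair of consecutive order statistics of the scores there lies at least one threshold. Then E[M] = ∞. -/
open MeasureTheory
open scoped ENNReal NNReal

noncomputable def orderStat {Ω : Type*} {n : ℕ} (X : Fin n → Ω → ℝ) (k : ℕ) (ω : Ω) : ℝ :=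
  sInf {x : ℝ | k ≤ (Finset.univ.filter (fun i => X i ω ≤ x)).card}

lemma exists_between_of_orderStat {Ω : Type*} {n : ℕ} (X : Fin n → Ω → ℝ) (Y : ℕ → Ω → ℝ)
    (ω : Ω) (a b : Fin n) (hab : X a ω < X b ω) (m : ℕ)
    (hm : ∀ i : ℕ, 1 ≤ i → i + 1 ≤ n →
        ∃ u < m, orderStat X i ω < Y u ω ∧ Y u ω < orderStat X (i + 1) ω) :
    ∃ u < m, X a ω < Y u ω ∧ Y u ω < X b ω := by
  classical
  set F : ℝ → Finset (Fin n) := fun c => Finset.univ.filter (fun i => X i ω ≤ c) with hF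
  set j : ℕ := (F (X a ω)).card with hjdef
  have hmemF : ∀ c (i : Fin n), i ∈ F c ↔ X i ω ≤ c := by
    intro c i; simp [hF]
  have ha : a ∈ F (X a ω) := (hmemF _ a).2 le_rfl
  have hb : b ∉ F (X a ω) := by
    rw [hmemF]; exact not_le.2 hab
  have hj1 : 1 ≤ j := Finset.card_pos.2 ⟨a, ha⟩
  have hjn : j + 1 ≤ n := by
    have : F (X a ω) ⊂ Finset.univ := by
      rw [Finset.ssubset_univ_iff]
      intro h
      exact hb (h ▸ Finset.mem_univ b)
    have := Finset.card_lt_card this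
    simpa [Finset.card_univ] using this
  have hlow : X a ω ≤ orderStat X j ω := by
    show X a ω ≤ sInf {x : ℝ | j ≤ (F x).card}
    refine le_csInf ⟨X a ω, by simp [Set.mem_setOf_eq, hjdef]⟩ ?_
    intro x hx
    by_contra hxa
    push_neg at hxa
    have hsub : F x ⊆ (F (X a ω)).erase a := by
      intro i hi
      have hix : X i ω ≤ x := (hmemF _ i).1 hi
      refine Finset.mem_erase.2 ⟨?_, (hmemF _ i).2 (hix.trans hxa.le)⟩
      rintro rfl
      exact absurd hix (not_le.2 hxa)
    have hcard : (F x).card ≤ j - 1 := by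
      have := Finset.card_le_card hsub
      simpa [Finset.card_erase_of_mem ha] using this
    have : j ≤ j - 1 := le_trans hx hcard
    omega
  have hhigh : orderStat X (j + 1) ω ≤ X b ω := by
    have hmem : X b ω ∈ {x : ℝ | j + 1 ≤ (F x).card} := by
      have hsub : F (X a ω) ⊂ F (X b ω) := by
        constructor
        · intro i hi
          exact (hmemF _ i).2 (((hmemF _ i).1 hi).trans hab.le)
        · intro h
          exact hb (h ((hmemF _ b).2 le_rfl))
      have := Finset.card_lt_card hsub
      simpa using this
    have hbdd : BddBelow {x : ℝ | j + 1 ≤ (F x).card} := by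
      refine ⟨Finset.univ.inf' ⟨a, Finset.mem_univ a⟩ (fun i => X i ω), ?_⟩
      intro x hx
      have : 0 < (F x).card := by
        have h1 : (1 : ℕ) ≤ j + 1 := by omega
        exact lt_of_lt_of_le Nat.zero_lt_one (le_trans h1 hx)
      obtain ⟨i, hi⟩ := Finset.card_pos.1 this
      exact le_trans (Finset.inf'_le _ (Finset.mem_univ i)) ((hmemF _ i).1 hi)
    show sInf {x : ℝ | j + 1 ≤ (F x).card} ≤ X b ω
    exact csInf_le hbdd hmem
  obtain ⟨u, hu, h1, h2⟩ := hm j hj1 hjn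
  exact ⟨u, hu, lt_of_le_of_lt hlow h1, lt_of_lt_of_le h2 hhigh⟩

/-- Let `X_1, …, X_n` (`n ≥ 2`) be i.i.d. uniform item scores on `[0,1]` and let
the user thresholds `Y_1, Y_2, …` be i.i.d. uniform on `[0,1]`, independent of the
scores. Let `M` be the least number of thresholds needed so that between every pair
of consecutive order statistics of the scores there lies at least one threshold
(`M = ∞` if there is no such number). Then `E[M] = ∞`. -/
theorem users_for_total_order_infinite_mean {Ω : Type*} [MeasurableSpace Ω]
    (μ : Measure Ω) [IsProbabilityMeasure μ] (n : ℕ) (hn : 2 ≤ n)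
    (X : Fin n → Ω → ℝ) (Y : ℕ → Ω → ℝ)
    (hmeas : ∀ j, Measurable (Sum.elim X Y j))
    (hindep : ProbabilityTheory.iIndepFun (Sum.elim X Y) μ)
    (hunif : ∀ j, Measure.map (Sum.elim X Y j) μ = volume.restrict (Set.Icc (0:ℝ) 1)) :
    ∫⁻ ω, (⨅ (m : ℕ) (_ : ∀ i : ℕ, 1 ≤ i → i + 1 ≤ n →
        ∃ u < m, orderStat X i ω < Y u ω ∧ Y u ω < orderStat X (i + 1) ω),
      (m : ℝ≥0∞)) ∂μ = ⊤ := by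
  classical
  set i0 : Fin n := ⟨0, by omega⟩ with hi0
  set i1 : Fin n := ⟨1, by omega⟩ with hi1
  have hi01 : i1 ≠ i0 := by
    simp [hi0, hi1, Fin.ext_iff]
  have measX : ∀ i : Fin n, Measurable (X i) := fun i => hmeas (Sum.inl i)
  have measY : ∀ u : ℕ, Measurable (Y u) := fun u => hmeas (Sum.inr u)
  set B : ℕ → Set Ω := fun m =>
    {ω | X i0 ω < X i1 ω} ∩
      ⋂ u ∈ Finset.range m, {ω | Y u ω ∉ Set.Ioo (X i0 ω) (X i1 ω)} with hBdef
  have hBmeas : ∀ m, MeasurableSet (B m) := by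
    intro m
    refine (measurableSet_lt (measX i0) (measX i1)).inter ?_
    refine MeasurableSet.biInter (Set.to_countable _) (fun u _ => ?_)
    have : {ω | Y u ω ∉ Set.Ioo (X i0 ω) (X i1 ω)} =
        ({ω | X i0 ω < Y u ω} ∩ {ω | Y u ω < X i1 ω})ᶜ := by
      ext ω; simp [Set.mem_Ioo, not_and_or]
    rw [this]
    exact ((measurableSet_lt (measX i0) (measY u)).inter
      (measurableSet_lt (measY u) (measX i1))).compl
  -- pointwise bound
  have hpt : ∀ ω, (∑' m, (B m).indicator (1 : Ω → ℝ≥0∞) ω) ≤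
      ⨅ (m : ℕ) (_ : ∀ i : ℕ, 1 ≤ i → i + 1 ≤ n →
        ∃ u < m, orderStat X i ω < Y u ω ∧ Y u ω < orderStat X (i + 1) ω),
      (m : ℝ≥0∞) := by
    intro ω
    refine le_iInf fun m => le_iInf fun hcond => ?_
    by_cases h01 : X i0 ω < X i1 ω
    · obtain ⟨u, hum, hu1, hu2⟩ := exists_between_of_orderStat X Y ω i0 i1 h01 m hcond
      have hz : ∀ k, k ∉ Finset.range m → (B k).indicator (1 : Ω → ℝ≥0∞) ω = 0 := by
        intro k hk
        rw [Finset.mem_range, not_lt] at hk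
        apply Set.indicator_of_notMem
        rintro ⟨-, h2⟩
        simp only [Set.mem_iInter] at h2
        exact (h2 u (Finset.mem_range.2 (lt_of_lt_of_le hum hk))) ⟨hu1, hu2⟩
      calc (∑' k, (B k).indicator (1 : Ω → ℝ≥0∞) ω)
          = ∑ k ∈ Finset.range m, (B k).indicator (1 : Ω → ℝ≥0∞) ω := tsum_eq_sum hz
        _ ≤ ∑ _k ∈ Finset.range m, 1 := Finset.sum_le_sum (fun k _ => by
            by_cases hmem : ω ∈ B k <;>
              simp [Set.indicator_of_mem, Set.indicator_of_notMem, hmem])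
        _ = (m : ℝ≥0∞) := by simp
    · have hz : ∀ k, (B k).indicator (1 : Ω → ℝ≥0∞) ω = 0 := fun k =>
        Set.indicator_of_notMem (fun hmem => h01 hmem.1) _
      simp [hz]
  -- lower bound on μ (B m)
  have hBlow : ∀ m : ℕ, ENNReal.ofReal (1 / (16 * ((m : ℝ) + 1))) ≤ μ (B m) := by
    intro m
    set t : ℝ := 1 / (2 * ((m : ℝ) + 1)) with ht
    set w : ℝ := 1 / (4 * ((m : ℝ) + 1)) with hwdef
    have hm0 : (0 : ℝ) ≤ (m : ℝ) := Nat.cast_nonneg m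
    have ht0 : 0 < t := by rw [ht]; positivity
    have hw0 : 0 < w := by rw [hwdef]; positivity
    have h2w : w + w = t := by rw [ht, hwdef]; field_simp; ring
    have htm : (m : ℝ) * t ≤ 1 / 2 := by
      rw [ht, mul_one_div, div_le_div_iff₀ (by positivity) (by norm_num)]
      nlinarith
    have ht1 : t ≤ 1 / 2 := by
      rw [ht, div_le_div_iff₀ (by positivity) (by norm_num)]
      nlinarith
    set I0 : ℕ → Set ℝ := fun k => Set.Ico ((k : ℝ) * t) ((k : ℝ) * t + w) with hI0
    set I1 : ℕ → Set ℝ := fun k => Set.Ico ((k : ℝ) * t + w) (((k : ℝ) + 1) * t) with hI1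
    set J : ℕ → Set ℝ := fun k => Set.Ioo ((k : ℝ) * t) (((k : ℝ) + 1) * t) with hJ
    set D : ℕ → Set Ω := fun k =>
      X i0 ⁻¹' I0 k ∩ (X i1 ⁻¹' I1 k ∩ ⋂ u ∈ Finset.range m, Y u ⁻¹' (J k)ᶜ) with hD
    have hDsub : ∀ k, D k ⊆ B m := by
      intro k ω hω
      obtain ⟨h0, h1, h2⟩ := hω
      simp only [Set.mem_preimage, hI0, hI1, Set.mem_Ico] at h0 h1
      refine ⟨lt_of_lt_of_le h0.2 h1.1, ?_⟩
      simp only [Set.mem_iInter] at h2 ⊢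
      intro u hu
      have hJc := h2 u hu
      simp only [Set.mem_preimage, Set.mem_compl_iff, hJ, Set.mem_Ioo] at hJc
      intro hmemIoo
      rcases hmemIoo with ⟨hya, hyb⟩
      exact hJc ⟨lt_of_le_of_lt h0.1 hya, hyb.trans h1.2⟩
    have hDmeas : ∀ k, MeasurableSet (D k) := by
      intro k
      refine ((measX i0) measurableSet_Ico).inter (((measX i1) measurableSet_Ico).inter ?_)
      exact MeasurableSet.biInter (Set.to_countable _)
        (fun u _ => (measY u) measurableSet_Ioo.compl)
    have hI0disj : ∀ k k' : ℕ, k < k' → Disjoint (I0 k) (I0 k') := by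
      intro k k' hkk'
      refine Set.disjoint_left.2 fun x hx hx' => ?_
      simp only [hI0, Set.mem_Ico] at hx hx'
      have hcast : (k : ℝ) + 1 ≤ (k' : ℝ) := by exact_mod_cast hkk'
      nlinarith [hx.2, hx'.1, mul_le_mul_of_nonneg_right hcast ht0.le]
    have hdisj : (↑(Finset.range (2 * (m + 1))) : Set ℕ).PairwiseDisjoint D := by
      intro k _ k' _ hkk'
      have hdI : Disjoint (I0 k) (I0 k') := by
        rcases lt_or_gt_of_ne hkk' with h | h
        · exact hI0disj k k' h
        · exact (hI0disj k' k h).symm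
      refine Set.disjoint_left.2 fun ω hω hω' => ?_
      exact Set.disjoint_left.1 hdI hω.1 hω'.1
    have hmarg : ∀ (j : Fin n ⊕ ℕ) (A : Set ℝ), MeasurableSet A →
        μ (Sum.elim X Y j ⁻¹' A) = volume (A ∩ Set.Icc (0:ℝ) 1) := by
      intro j A hA
      rw [← Measure.map_apply (hmeas j) hA, hunif j, Measure.restrict_apply hA]
    have hDmeasure : ∀ k, k < 2 * (m + 1) →
        μ (D k) = ENNReal.ofReal w * (ENNReal.ofReal w * ENNReal.ofReal (1 - t) ^ m) := by
      intro k hk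
      have hk' : (k : ℝ) + 1 ≤ 2 * ((m : ℝ) + 1) := by exact_mod_cast hk
      have hub : ((k : ℝ) + 1) * t ≤ 1 := by
        calc ((k : ℝ) + 1) * t ≤ (2 * ((m : ℝ) + 1)) * t :=
              mul_le_mul_of_nonneg_right hk' ht0.le
          _ = 1 := by rw [ht]; field_simp
      have hlb : (0 : ℝ) ≤ (k : ℝ) * t := by positivity
      have hsub0 : I0 k ⊆ Set.Icc (0:ℝ) 1 := by
        intro x hx
        simp only [hI0, Set.mem_Ico] at hx
        simp only [Set.mem_Icc]
        constructor
        · linarith [hx.1, hlb]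
        · nlinarith [hx.2, hub, hw0, h2w]
      have hsub1 : I1 k ⊆ Set.Icc (0:ℝ) 1 := by
        intro x hx
        simp only [hI1, Set.mem_Ico] at hx
        simp only [Set.mem_Icc]
        constructor
        · linarith [hx.1, hlb, hw0]
        · linarith [hx.2, hub]
      have hsubJ : J k ⊆ Set.Icc (0:ℝ) 1 := by
        intro x hx
        simp only [hJ, Set.mem_Ioo] at hx
        simp only [Set.mem_Icc]
        exact ⟨le_trans hlb hx.1.le, hx.2.le.trans hub⟩
      have hvol0 : volume (I0 k ∩ Set.Icc (0:ℝ) 1) = ENNReal.ofReal w := by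
        rw [Set.inter_eq_left.2 hsub0]
        simp only [hI0]
        rw [Real.volume_Ico]
        congr 1; ring
      have hvol1 : volume (I1 k ∩ Set.Icc (0:ℝ) 1) = ENNReal.ofReal w := by
        rw [Set.inter_eq_left.2 hsub1]
        simp only [hI1]
        rw [Real.volume_Ico]
        congr 1; nlinarith [h2w]
      have hvolJ : volume ((J k)ᶜ ∩ Set.Icc (0:ℝ) 1) = ENNReal.ofReal (1 - t) := by
        rw [← Set.diff_eq_compl_inter]
        rw [measure_diff hsubJ measurableSet_Ioo.nullMeasurableSet
          (by simp only [hJ]; rw [Real.volume_Ioo]; exact ENNReal.ofReal_ne_top)]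
        rw [Real.volume_Icc]
        simp only [hJ]
        rw [Real.volume_Ioo]
        rw [show ((k : ℝ) + 1) * t - (k : ℝ) * t = t by ring, show (1 : ℝ) - 0 = 1 by ring]
        rw [← ENNReal.ofReal_sub _ ht0.le]
      set SS : Finset (Fin n ⊕ ℕ) :=
        insert (Sum.inl i0) (insert (Sum.inl i1) ((Finset.range m).image Sum.inr)) with hSS
      set sets : Fin n ⊕ ℕ → Set ℝ :=
        Sum.elim (fun i => if i = i0 then I0 k else I1 k) (fun _ => (J k)ᶜ) with hsets
      have e0 : sets (Sum.inl i0) = I0 k := by simp [hsets]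
      have e1 : sets (Sum.inl i1) = I1 k := by simp [hsets, hi01]
      have e2 : ∀ u : ℕ, sets (Sum.inr u) = (J k)ᶜ := fun u => rfl
      have hsets_meas : ∀ j, MeasurableSet (sets j) := by
        rintro (i | u)
        · show MeasurableSet (if i = i0 then I0 k else I1 k)
          split <;> exact measurableSet_Ico
        · exact measurableSet_Ioo.compl
      have hprod := hindep.measure_inter_preimage_eq_mul (sets := sets) SS
        (fun j _ => hsets_meas j)
      have hnotmem0 : Sum.inl i0 ∉ insert (Sum.inl i1) ((Finset.range m).image Sum.inr) := by
        simp [hi01.symm]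
      have hnotmem1 : (Sum.inl i1 : Fin n ⊕ ℕ) ∉ (Finset.range m).image Sum.inr := by simp
      rw [hSS, Finset.prod_insert hnotmem0, Finset.prod_insert hnotmem1,
        Finset.prod_image (fun _ _ _ _ h => Sum.inr.inj h)] at hprod
      have hset_eq : (⋂ j ∈ SS, Sum.elim X Y j ⁻¹' sets j) = D k := by
        rw [hSS, Finset.set_biInter_insert, Finset.set_biInter_insert,
          Finset.set_biInter_finset_image, e0, e1]
        rfl
      rw [hset_eq] at hprod
      rw [hprod]
      rw [show (Sum.elim X Y (Sum.inl i0) ⁻¹' sets (Sum.inl i0)) =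
          Sum.elim X Y (Sum.inl i0) ⁻¹' I0 k by rw [e0]]
      rw [show (Sum.elim X Y (Sum.inl i1) ⁻¹' sets (Sum.inl i1)) =
          Sum.elim X Y (Sum.inl i1) ⁻¹' I1 k by rw [e1]]
      rw [hmarg _ _ measurableSet_Ico, hmarg _ _ measurableSet_Ico]
      rw [hvol0, hvol1]
      congr 1
      congr 1
      calc ∏ u ∈ Finset.range m, μ (Sum.elim X Y (Sum.inr u) ⁻¹' sets (Sum.inr u))
          = ∏ _u ∈ Finset.range m, ENNReal.ofReal (1 - t) := by
            refine Finset.prod_congr rfl fun u _ => ?_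
            rw [e2, hmarg _ _ measurableSet_Ioo.compl, hvolJ]
        _ = ENNReal.ofReal (1 - t) ^ m := by
            rw [Finset.prod_const, Finset.card_range]
    have hBge : ∑ k ∈ Finset.range (2 * (m + 1)), μ (D k) ≤ μ (B m) := by
      rw [← measure_biUnion_finset hdisj (fun k _ => hDmeas k)]
      exact measure_mono (Set.iUnion₂_subset fun k _ => hDsub k)
    have hsum_eq : ∑ k ∈ Finset.range (2 * (m + 1)), μ (D k)
        = ((2 * (m + 1) : ℕ) : ℝ≥0∞) *
          (ENNReal.ofReal w * (ENNReal.ofReal w * ENNReal.ofReal (1 - t) ^ m)) := by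
      rw [Finset.sum_congr rfl (fun k hk => hDmeasure k (Finset.mem_range.1 hk)),
        Finset.sum_const, Finset.card_range, nsmul_eq_mul]
    refine le_trans ?_ hBge
    rw [hsum_eq]
    have ht1' : (0 : ℝ) ≤ 1 - t := by linarith
    have hpow : (1 : ℝ) / 2 ≤ (1 - t) ^ m := by
      have hb := one_add_mul_le_pow (a := -t) (by linarith) m
      have e : (1 + -t) ^ m = (1 - t) ^ m := by ring_nf
      rw [e] at hb
      have : (1 : ℝ) / 2 ≤ 1 + (m : ℝ) * (-t) := by
        have : (m : ℝ) * t ≤ 1 / 2 := htm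
        linarith
      linarith
    rw [show ((2 * (m + 1) : ℕ) : ℝ≥0∞) = ENNReal.ofReal ((2 * (m + 1) : ℕ) : ℝ) from
      (ENNReal.ofReal_natCast _).symm]
    rw [← ENNReal.ofReal_pow ht1', ← ENNReal.ofReal_mul hw0.le,
      ← ENNReal.ofReal_mul hw0.le, ← ENNReal.ofReal_mul (by positivity)]
    apply ENNReal.ofReal_le_ofReal
    push_cast
    have key : 2 * ((m : ℝ) + 1) * (w * w) = 1 / (8 * ((m : ℝ) + 1)) := by
      rw [hwdef]; field_simp; ring
    have hden : ((m : ℝ) + 1) ≠ 0 := by positivity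
    calc 1 / (16 * ((m : ℝ) + 1)) = 1 / (8 * ((m : ℝ) + 1)) * (1 / 2) := by
          field_simp
          ring
      _ ≤ 1 / (8 * ((m : ℝ) + 1)) * ((1 - t) ^ m) :=
          mul_le_mul_of_nonneg_left hpow (by positivity)
      _ = 2 * ((m : ℝ) + 1) * (w * (w * (1 - t) ^ m)) := by rw [← key]; ring
  -- divergence of the harmonic-type series
  have hdiv : (∑' m : ℕ, ENNReal.ofReal (1 / (16 * ((m : ℝ) + 1)))) = ⊤ := by
    by_contra hne
    have hcoe : ∀ m : ℕ, ENNReal.ofReal (1 / (16 * ((m : ℝ) + 1))) =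
        ((Real.toNNReal (1 / (16 * ((m : ℝ) + 1))) : ℝ≥0) : ℝ≥0∞) := fun m => rfl
    rw [funext hcoe] at hne
    have hs1 : Summable (fun m : ℕ => Real.toNNReal (1 / (16 * ((m : ℝ) + 1)))) :=
      ENNReal.tsum_coe_ne_top_iff_summable.1 hne
    have hs2 : Summable (fun m : ℕ => 1 / (16 * ((m : ℝ) + 1))) := by
      have := NNReal.summable_coe.2 hs1
      refine this.congr fun m => ?_
      exact Real.coe_toNNReal _ (by positivity)
    have hs3 : Summable (fun m : ℕ => 1 / ((m : ℝ) + 1)) := by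
      have := hs2.mul_left (16 : ℝ)
      refine this.congr fun m => ?_
      field_simp
    have hs4 : Summable (fun m : ℕ => 1 / ((m : ℕ) : ℝ)) := by
      refine (summable_nat_add_iff 1).1 (hs3.congr fun m => ?_)
      push_cast
      ring
    exact Real.not_summable_one_div_natCast hs4
  -- combine
  rw [eq_top_iff]
  calc (⊤ : ℝ≥0∞) = ∑' m : ℕ, ENNReal.ofReal (1 / (16 * ((m : ℝ) + 1))) := hdiv.symm
    _ ≤ ∑' m : ℕ, μ (B m) := ENNReal.tsum_le_tsum hBlow
    _ = ∫⁻ ω, ∑' m, (B m).indicator (1 : Ω → ℝ≥0∞) ω ∂μ := by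
        rw [lintegral_tsum (fun m => (measurable_one.indicator (hBmeas m)).aemeasurable)]
        exact tsum_congr fun m => (lintegral_indicator_one (hBmeas m)).symm
    _ ≤ _ := lintegral_mono hpt
end

section
/- For all natural numbers k ≤ n ≤ m with m sufficiently large, C(n,k)/C(k+m,k) ≤ (e²/(2π))·(n/m)^k, where C denotes the binomial coefficient. -/
open Real

lemma descFactorial_mul_pow_le (m n k : ℕ) (hk : k ≤ n) (hn : n ≤ m) :
    n.descFactorial k * m ^ k ≤ (k + m).descFactorial k * n ^ k := by
  have hmk : m ^ k = ∏ _i ∈ Finset.range k, m := by simp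
  have hnk : n ^ k = ∏ _i ∈ Finset.range k, n := by simp
  rw [Nat.descFactorial_eq_prod_range, Nat.descFactorial_eq_prod_range, hmk, hnk,
    ← Finset.prod_mul_distrib, ← Finset.prod_mul_distrib]
  apply Finset.prod_le_prod'
  intro i hi
  rw [Finset.mem_range] at hi
  have h1 : (n - i) * m ≤ n * m := Nat.mul_le_mul_right _ (Nat.sub_le _ _)
  have h2 : (k + m - i) * n = (m + (k - i)) * n := by congr 1; omega
  calc (n - i) * m ≤ n * m := h1
    _ ≤ (m + (k - i)) * n := by
        rw [Nat.add_mul, Nat.mul_comm]; exact Nat.le_add_right _ _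
    _ = (k + m - i) * n := h2.symm

/-- For all `k ≤ n ≤ m` with `m` sufficiently large,
`C(n,k)/C(k+m,k) ≤ (e²/(2π))·(n/m)^k`. -/
theorem binomial_ratio_bound :
    ∃ M : ℕ, ∀ m : ℕ, M ≤ m → ∀ n k : ℕ, k ≤ n → n ≤ m →
      (n.choose k : ℝ) / ((k + m).choose k : ℝ)
        ≤ Real.exp 1 ^ 2 / (2 * Real.pi) * ((n : ℝ) / (m : ℝ)) ^ k := by
  refine ⟨1, fun m hm n k hk hn => ?_⟩
  have hm0 : (0:ℝ) < m := by exact_mod_cast hm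
  have hc0 : (0:ℝ) < ((k + m).choose k : ℝ) := by
    exact_mod_cast Nat.choose_pos (Nat.le_add_right k m)
  have hnat : n.choose k * m ^ k ≤ (k + m).choose k * n ^ k := by
    have h := descFactorial_mul_pow_le m n k hk hn
    rw [Nat.descFactorial_eq_factorial_mul_choose, Nat.descFactorial_eq_factorial_mul_choose,
      Nat.mul_assoc, Nat.mul_assoc] at h
    exact Nat.le_of_mul_le_mul_left h k.factorial_pos
  have key : (n.choose k : ℝ) / ((k + m).choose k : ℝ) ≤ ((n:ℝ) / m) ^ k := by
    rw [div_pow, div_le_div_iff₀ hc0 (by positivity)]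
    have h : ((n.choose k : ℝ)) * (m:ℝ) ^ k ≤ ((k + m).choose k : ℝ) * (n:ℝ) ^ k := by
      exact_mod_cast hnat
    linarith [h]
  have hconst : (1:ℝ) ≤ Real.exp 1 ^ 2 / (2 * Real.pi) := by
    rw [le_div_iff₀ (by positivity)]
    nlinarith [Real.exp_one_gt_d9, Real.pi_lt_d2]
  calc (n.choose k : ℝ) / ((k + m).choose k : ℝ) ≤ ((n:ℝ) / m) ^ k := key
    _ ≤ Real.exp 1 ^ 2 / (2 * Real.pi) * ((n:ℝ) / m) ^ k :=
        le_mul_of_one_le_left (by positivity) hconst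
end

section
/- For the geometric-sum error term: if 2c_X·n/m < 1, then Σ_{k=3}^n C(n,k)/C(k+m,k) · (2c_X)^k ≤ (e²/(2π)) · (2c_X·n/m)³ / (1 − 2c_X·n/m), where C denotes binomial coefficients. -/
/-- `m^k · n.descFactorial k ≤ n^k · (k+m).descFactorial k`. -/
lemma descFactorial_ratio (n m : ℕ) : ∀ k : ℕ,
    m ^ k * n.descFactorial k ≤ n ^ k * (k + m).descFactorial k := by
  intro k
  induction k with
  | zero => simp
  | succ k ih =>
      have h1 : (k + 1 + m).descFactorial (k + 1)
          = (m + 1) * (k + 1 + m).descFactorial k := by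
        rw [Nat.descFactorial_succ]
        congr 1
        omega
      have h2 : (k + m).descFactorial k ≤ (k + 1 + m).descFactorial k :=
        Nat.descFactorial_le _ (by omega)
      have h3 : m * (n - k) ≤ n * (m + 1) := by
        calc m * (n - k) ≤ m * n := Nat.mul_le_mul_left _ (Nat.sub_le _ _)
          _ ≤ n * (m + 1) := by rw [Nat.mul_comm]; exact Nat.mul_le_mul_left _ (by omega)
      calc m ^ (k + 1) * n.descFactorial (k + 1)
          = (m * (n - k)) * (m ^ k * n.descFactorial k) := by
            rw [Nat.descFactorial_succ]; ring
        _ ≤ (n * (m + 1)) * (n ^ k * (k + m).descFactorial k) :=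
            Nat.mul_le_mul h3 ih
        _ ≤ (n * (m + 1)) * (n ^ k * (k + 1 + m).descFactorial k) := by
            exact Nat.mul_le_mul_left _ (Nat.mul_le_mul_left _ h2)
        _ = n ^ (k + 1) * (k + 1 + m).descFactorial (k + 1) := by
            rw [h1]; ring

lemma choose_ratio (n m k : ℕ) :
    m ^ k * n.choose k ≤ n ^ k * (k + m).choose k := by
  have h := descFactorial_ratio n m k
  rw [Nat.descFactorial_eq_factorial_mul_choose, Nat.descFactorial_eq_factorial_mul_choose] at h
  have hk : 0 < Nat.factorial k := Nat.factorial_pos k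
  calc m ^ k * n.choose k
      = (m ^ k * (Nat.factorial k * n.choose k)) / Nat.factorial k := by
        rw [Nat.mul_left_comm, Nat.mul_div_cancel_left _ hk]
    _ ≤ (n ^ k * (Nat.factorial k * (k + m).choose k)) / Nat.factorial k := Nat.div_le_div_right h
    _ = n ^ k * (k + m).choose k := by
        rw [Nat.mul_left_comm, Nat.mul_div_cancel_left _ hk]

lemma geom_sum_bound (r : ℝ) (h0 : 0 ≤ r) (h1 : r < 1) (N : ℕ) :
    ∑ i ∈ Finset.range N, r ^ i ≤ 1 / (1 - r) := by
  have h2 : 0 < 1 - r := by linarith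
  have h3 : ∑ i ∈ Finset.range N, r ^ i = (1 - r ^ N) / (1 - r) := by
    rw [geom_sum_eq h1.ne, show (1:ℝ) - r ^ N = -(r ^ N - 1) by ring,
      show (1:ℝ) - r = -(r - 1) by ring, neg_div_neg_eq]
  rw [h3]
  have h4 : 0 ≤ r ^ N := pow_nonneg h0 N
  gcongr <;> linarith

/-- Geometric-sum error bound: if `2·c_X·n/m < 1` (with `n ≤ m`, `c_X > 0`), then
`Σ_{k=3}^n C(n,k)/C(k+m,k)·(2c_X)^k ≤ (e²/(2π))·(2c_X n/m)³/(1 − 2c_X n/m)`. -/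
theorem geometric_error_bound (n m : ℕ) (cX : ℝ) (hnm : n ≤ m) (hc : 0 < cX)
    (hr : 2 * cX * n / m < 1) :
    ∑ k ∈ Finset.Icc 3 n,
        (n.choose k : ℝ) / ((k + m).choose k : ℝ) * (2 * cX) ^ k
      ≤ Real.exp 1 ^ 2 / (2 * Real.pi) *
          (2 * cX * n / m) ^ 3 / (1 - 2 * cX * n / m) := by
  by_cases hm : m = 0
  · have hn : n = 0 := by omega
    subst hm hn
    simp
  have hm0 : (0 : ℝ) < m := by positivity
  set r : ℝ := 2 * cX * n / m with hrdef
  have hr0 : 0 ≤ r := by positivity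
  have hr1 : r < 1 := hr
  have hC : (1 : ℝ) ≤ Real.exp 1 ^ 2 / (2 * Real.pi) := by
    have he : (2.7182818283 : ℝ) < Real.exp 1 := Real.exp_one_gt_d9
    have hp : Real.pi < 3.15 := by linarith [Real.pi_lt_d2]
    have hp0 : (0 : ℝ) < Real.pi := Real.pi_pos
    rw [le_div_iff₀ (by positivity)]
    nlinarith
  -- pointwise bound
  have hpt : ∀ k ∈ Finset.Icc 3 n,
      (n.choose k : ℝ) / ((k + m).choose k : ℝ) * (2 * cX) ^ k ≤ r ^ k := by
    intro k _
    have hch : (0 : ℝ) < ((k + m).choose k : ℝ) := by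
      exact_mod_cast Nat.choose_pos (Nat.le_add_right k m)
    have hkey : (n.choose k : ℝ) / ((k + m).choose k : ℝ) ≤ ((n : ℝ) / m) ^ k := by
      rw [div_pow, div_le_div_iff₀ hch (by positivity)]
      have := choose_ratio n m k
      have : ((m : ℝ)) ^ k * (n.choose k : ℝ) ≤ ((n : ℝ)) ^ k * ((k + m).choose k : ℝ) := by
        exact_mod_cast this
      linarith
    calc (n.choose k : ℝ) / ((k + m).choose k : ℝ) * (2 * cX) ^ k
        ≤ ((n : ℝ) / m) ^ k * (2 * cX) ^ k := by
          apply mul_le_mul_of_nonneg_right hkey (by positivity)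
      _ = r ^ k := by rw [← mul_pow, hrdef]; congr 1; ring
  have hsum : ∑ k ∈ Finset.Icc 3 n,
      (n.choose k : ℝ) / ((k + m).choose k : ℝ) * (2 * cX) ^ k
      ≤ ∑ k ∈ Finset.Icc 3 n, r ^ k := Finset.sum_le_sum hpt
  have hgeom : ∑ k ∈ Finset.Icc 3 n, r ^ k ≤ r ^ 3 / (1 - r) := by
    rw [← Finset.Ico_add_one_right_eq_Icc, Finset.sum_Ico_eq_sum_range]
    have : ∀ i ∈ Finset.range (n + 1 - 3), r ^ (3 + i) = r ^ 3 * r ^ i := by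
      intro i _; rw [pow_add]
    rw [Finset.sum_congr rfl this, ← Finset.mul_sum]
    calc r ^ 3 * ∑ i ∈ Finset.range (n + 1 - 3), r ^ i
        ≤ r ^ 3 * (1 / (1 - r)) :=
          mul_le_mul_of_nonneg_left (geom_sum_bound r hr0 hr1 _) (by positivity)
      _ = r ^ 3 / (1 - r) := by ring
  have h1r : 0 < 1 - r := by linarith
  calc ∑ k ∈ Finset.Icc 3 n,
        (n.choose k : ℝ) / ((k + m).choose k : ℝ) * (2 * cX) ^ k
      ≤ r ^ 3 / (1 - r) := hsum.trans hgeom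
    _ = 1 * r ^ 3 / (1 - r) := by ring
    _ ≤ Real.exp 1 ^ 2 / (2 * Real.pi) * r ^ 3 / (1 - r) := by
        gcongr
    _ = Real.exp 1 ^ 2 / (2 * Real.pi) * (2 * cX * n / m) ^ 3 / (1 - 2 * cX * n / m) := by
        rw [hrdef]
end
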